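/- arXiv:2111.00721 — 5 statements merged into one kernel-verified Lean document; each statement's English description precedes it below -/
import Mathlib

section
/- Let Δ be a natural number with Δ ≥ 25 and let C be a real number with C ≥ (e/(e-1))·Δ. Then |∑_{i=1}^{Δ} 1/(C-i) − log(C/(C-Δ))| ≤ 5/C. -/
/-!
Each term `1/(C-i)` is compared with `log (C-i+1) - log (C-i) = ∫_{C-i}^{C-i+1} dy/y`,
which lies between `1/(C-i+1)` and `1/(C-i)`. The logarithms telescope to `log (C/(C-Δ))`,
so the error is at least `0` and at most the telescoping sum `1/(C-Δ) - 1/C`. The hypothesis on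
`C` says exactly that `C - Δ ≥ C/e`, whence this is at most `(e-1)/C ≤ 5/C`.
-/

open Finset Real

theorem sum_Icc_one_sub_sub_eq (g : ℝ → ℝ) (x : ℝ) (n : ℕ) :
    ∑ i ∈ Icc 1 n, (g (x - i + 1) - g (x - i)) = g x - g (x - n) := by
  induction n with
  | zero => simp
  | succ n ih =>
    rw [sum_Icc_succ_top (by omega), ih]
    push_cast
    ring_nf

theorem one_div_add_one_le_log_add_one_sub_log {x : ℝ} (hx : 0 < x) :
    1 / (x + 1) ≤ log (x + 1) - log x := by
  have h := one_sub_inv_le_log_of_pos (div_pos (by linarith : 0 < x + 1) hx)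
  rw [log_div (by linarith) hx.ne', inv_div] at h
  calc 1 / (x + 1) = 1 - x / (x + 1) := by field_simp; ring
    _ ≤ _ := h

theorem log_add_one_sub_log_le_one_div {x : ℝ} (hx : 0 < x) :
    log (x + 1) - log x ≤ 1 / x := by
  have h := log_le_sub_one_of_pos (div_pos (by linarith : 0 < x + 1) hx)
  rw [log_div (by linarith) hx.ne'] at h
  calc _ ≤ (x + 1) / x - 1 := h
    _ = 1 / x := by field_simp; ring

section HarmonicSum

variable (Δ : ℕ) (C : ℝ)

theorem sum_Icc_one_div_sub_log_eq (hΔC : (Δ : ℝ) < C) :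
    ∑ i ∈ Icc 1 Δ, 1 / (C - i) - log (C / (C - Δ))
      = ∑ i ∈ Icc 1 Δ, (1 / (C - i) - (log (C - i + 1) - log (C - i))) := by
  have hC : 0 < C := lt_of_le_of_lt (Nat.cast_nonneg Δ) hΔC
  rw [sum_sub_distrib, sum_Icc_one_sub_sub_eq, log_div hC.ne' (by linarith)]

theorem sum_Icc_one_div_sub_log_nonneg (hΔC : (Δ : ℝ) < C) :
    0 ≤ ∑ i ∈ Icc 1 Δ, 1 / (C - i) - log (C / (C - Δ)) := by
  rw [sum_Icc_one_div_sub_log_eq Δ C hΔC]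
  refine sum_nonneg fun i hi => ?_
  have hi : (i : ℝ) ≤ Δ := by exact_mod_cast (mem_Icc.1 hi).2
  linarith [log_add_one_sub_log_le_one_div (by linarith : 0 < C - i)]

theorem sum_Icc_one_div_sub_log_le (hΔC : (Δ : ℝ) < C) :
    ∑ i ∈ Icc 1 Δ, 1 / (C - i) - log (C / (C - Δ)) ≤ 1 / (C - Δ) - 1 / C := by
  have htele : ∑ i ∈ Icc 1 Δ, (1 / (C - i) - 1 / (C - i + 1)) = 1 / (C - Δ) - 1 / C := by
    have := sum_Icc_one_sub_sub_eq (fun y => 1 / y) C Δ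
    rw [← neg_sub, ← this, ← sum_neg_distrib]
    simp only [neg_sub]
  rw [sum_Icc_one_div_sub_log_eq Δ C hΔC, ← htele]
  refine sum_le_sum fun i hi => ?_
  have hi : (i : ℝ) ≤ Δ := by exact_mod_cast (mem_Icc.1 hi).2
  linarith [one_div_add_one_le_log_add_one_sub_log (by linarith : 0 < C - i)]

end HarmonicSum

section RatioBound

variable {a x C : ℝ}

theorem lt_of_div_sub_one_mul_le (ha : 1 < a) (hx : 0 < x) (h : a / (a - 1) * x ≤ C) :
    x < C := by
  have : 1 < a / (a - 1) := by rw [one_lt_div (by linarith)]; linarith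
  nlinarith

theorem one_div_sub_le_div_of_div_sub_one_mul_le (ha : 1 < a) (hx : 0 < x)
    (h : a / (a - 1) * x ≤ C) : 1 / (C - x) ≤ a / C := by
  have hxC := lt_of_div_sub_one_mul_le ha hx h
  rw [div_mul_eq_mul_div, div_le_iff₀ (by linarith)] at h
  rw [div_le_div_iff₀ (by linarith) (by linarith)]
  linarith

end RatioBound

/-- For `Δ ≥ 25` and `C ≥ (e/(e-1))·Δ`,
`|∑_{i=1}^{Δ} 1/(C-i) − log(C/(C-Δ))| ≤ 5/C`. -/
theorem stmt_5 (Δ : ℕ) (hΔ : 25 ≤ Δ) (C : ℝ)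
    (hC : Real.exp 1 / (Real.exp 1 - 1) * Δ ≤ C) :
    |∑ i ∈ Finset.Icc 1 Δ, 1 / (C - i) - Real.log (C / (C - Δ))| ≤ 5 / C := by
  have he : 1 < exp 1 := one_lt_exp_iff.2 one_pos
  have hΔpos : (0 : ℝ) < Δ := by exact_mod_cast (by omega : 0 < Δ)
  have hΔC := lt_of_div_sub_one_mul_le he hΔpos hC
  have hCpos : 0 < C := hΔpos.trans hΔC
  rw [abs_of_nonneg (sum_Icc_one_div_sub_log_nonneg Δ C hΔC)]
  calc _ ≤ 1 / (C - Δ) - 1 / C := sum_Icc_one_div_sub_log_le Δ C hΔC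
    _ ≤ exp 1 / C - 1 / C := by
      linarith [one_div_sub_le_div_of_div_sub_one_mul_le he hΔpos hC]
    _ ≤ 5 / C := by
      rw [div_sub_div_same]
      gcongr
      linarith [exp_one_lt_d9]
end

section
/- Let Δ be a natural number with Δ ≥ 25 and let C be a real number with C ≥ (e/(e-1))·Δ. Let E be a real number with 0 ≤ E ≤ 1, and let ε₁, …, ε_Δ be real numbers with -2 ≤ ε_i ≤ E for all i. Then 1 − ∏_{i=1}^{Δ} (1 + ε_i/(C-i)) ≥ 1 − (1 + 100/C)·exp(E·log(C/(C-Δ))). -/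
/-!
Every factor lies in `[0, 1 + E/(C-i)]` (as `C - i ≥ 2`), and `1 + x ≤ exp x`, so the product is at most
`exp (E · ∑ 1/(C-i))`. Splitting `1/t = 1/(t+1) + (1/t - 1/(t+1))` and using
`1/(t+1) ≤ log (t+1) - log t`, both parts telescope:
`∑ 1/(C-i) ≤ log (C/(C-Δ)) + Δ/(C(C-Δ))`. The hypothesis on `C` gives `Δ ≤ 2(C-Δ)`,
so as `E ≤ 1` the error term is at most `2/C`, and `exp (2/C) ≤ 1 + 4/C ≤ 1 + 100/C`.
-/

open Finset Real

lemma inv_add_one_le_log_sub_log {t : ℝ} (ht : 0 < t) : (t + 1)⁻¹ ≤ log (t + 1) - log t := by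
  have h := one_sub_inv_le_log_of_pos (div_pos (by linarith : 0 < t + 1) ht)
  rw [log_div (by positivity) ht.ne', inv_div] at h
  calc (t + 1)⁻¹ = 1 - t / (t + 1) := by field_simp; ring
    _ ≤ _ := h

lemma exp_le_one_add_two_mul {x : ℝ} (hx0 : 0 ≤ x) (hx : x ≤ 1 / 2) : exp x ≤ 1 + 2 * x := by
  calc exp x ≤ 1 / (1 - x) := exp_bound_div_one_sub_of_interval hx0 (by linarith)
    _ ≤ 1 + 2 * x := by
      rw [div_le_iff₀ (by linarith)]
      nlinarith

lemma sum_Icc_sub_telescope (f : ℝ → ℝ) (C : ℝ) (n : ℕ) :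
    ∑ i ∈ Icc 1 n, (f (C - i + 1) - f (C - i)) = f C - f (C - n) := by
  induction n with
  | zero => simp
  | succ n ih =>
    rw [sum_Icc_succ_top (by omega), ih]
    push_cast
    ring_nf

lemma sum_Icc_inv_sub_le {n : ℕ} {C : ℝ} (hn : (n : ℝ) < C) :
    ∑ i ∈ Icc 1 n, (C - i)⁻¹ ≤ log (C / (C - n)) + ((C - n)⁻¹ - C⁻¹) := by
  have hterm : ∀ i ∈ Icc 1 n, (C - i)⁻¹ ≤
      (log (C - i + 1) - log (C - i)) + ((C - i)⁻¹ - (C - i + 1)⁻¹) := by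
    intro i hi
    have hi : (i : ℝ) ≤ n := by exact_mod_cast (mem_Icc.mp hi).2
    linarith [inv_add_one_le_log_sub_log (by linarith : 0 < C - i)]
  have hC : 0 < C := by linarith [n.cast_nonneg (α := ℝ)]
  calc ∑ i ∈ Icc 1 n, (C - i)⁻¹
      ≤ ∑ i ∈ Icc 1 n, ((log (C - i + 1) - log (C - i)) + ((C - i)⁻¹ - (C - i + 1)⁻¹)) :=
        sum_le_sum hterm
    _ = log (C / (C - n)) + ((C - n)⁻¹ - C⁻¹) := by
      have hinv := sum_Icc_sub_telescope (fun x ↦ -x⁻¹) C n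
      simp only [neg_sub_neg] at hinv
      rw [sum_add_distrib, sum_Icc_sub_telescope log, hinv, log_div hC.ne' (by linarith)]

lemma prod_one_add_div_le_exp {ι : Type*} {s : Finset ι} {ε d : ι → ℝ} {E : ℝ}
    (hd : ∀ i ∈ s, 0 < d i) (hlo : ∀ i ∈ s, -d i ≤ ε i) (hhi : ∀ i ∈ s, ε i ≤ E) :
    ∏ i ∈ s, (1 + ε i / d i) ≤ exp (E * ∑ i ∈ s, (d i)⁻¹) := by
  rw [mul_sum, exp_sum]
  refine prod_le_prod (fun i hi ↦ ?_) (fun i hi ↦ ?_)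
  · have : -1 ≤ ε i / d i := by rw [le_div_iff₀ (hd i hi)]; linarith [hlo i hi]
    linarith
  · calc 1 + ε i / d i ≤ E * (d i)⁻¹ + 1 := by
          rw [← div_eq_mul_inv, add_comm]
          gcongr
          · exact (hd i hi).le
          · exact hhi i hi
      _ ≤ exp (E * (d i)⁻¹) := add_one_le_exp _

lemma le_two_mul_sub_of_exp_div_mul_le {x C : ℝ} (hx : 0 ≤ x)
    (hC : exp 1 / (exp 1 - 1) * x ≤ C) : x ≤ 2 * (C - x) := by
  have he1 : 1 < exp 1 := by linarith [add_one_le_exp 1]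
  have he3 : exp 1 < 3 := by linarith [exp_one_lt_d9]
  rw [div_mul_eq_mul_div, div_le_iff₀ (by linarith)] at hC
  have hCx : 0 ≤ C - x := by nlinarith
  nlinarith [mul_nonneg (by linarith : (0 : ℝ) ≤ 3 - exp 1) hCx]

lemma mul_sum_Icc_inv_sub_le {n : ℕ} {C E : ℝ} (hE0 : 0 ≤ E) (hE1 : E ≤ 1)
    (hnC : (n : ℝ) < C) (hn : (n : ℝ) ≤ 2 * (C - n)) :
    E * ∑ i ∈ Icc 1 n, (C - i)⁻¹ ≤ E * log (C / (C - n)) + 2 / C := by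
  have hC : 0 < C := by linarith [n.cast_nonneg (α := ℝ)]
  have hgap : (C - n)⁻¹ - C⁻¹ ≤ 2 / C := by
    rw [inv_sub_inv (by linarith) hC.ne', div_le_div_iff₀ (by nlinarith) hC]
    nlinarith
  have hgap0 : 0 ≤ (C - n)⁻¹ - C⁻¹ := by
    rw [sub_nonneg]; exact inv_anti₀ (by linarith) (by linarith [n.cast_nonneg (α := ℝ)])
  have := mul_le_mul_of_nonneg_left (sum_Icc_inv_sub_le hnC) hE0
  nlinarith

/-- Single-level error bound, lower-bound half: with `Δ ≥ 25`, `C ≥ (e/(e-1))·Δ`,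
`0 ≤ E ≤ 1` and `-2 ≤ ε_i ≤ E` for `i = 1, …, Δ`, we have
`1 − ∏_{i=1}^{Δ} (1 + ε_i/(C-i)) ≥ 1 − (1 + 100/C)·exp(E·log(C/(C-Δ)))`. -/
theorem stmt_7 (Δ : ℕ) (hΔ : 25 ≤ Δ) (C : ℝ)
    (hC : Real.exp 1 / (Real.exp 1 - 1) * Δ ≤ C)
    (E : ℝ) (hE0 : 0 ≤ E) (hE1 : E ≤ 1) (ε : ℕ → ℝ)
    (hlo : ∀ i ∈ Finset.Icc 1 Δ, -2 ≤ ε i)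
    (hhi : ∀ i ∈ Finset.Icc 1 Δ, ε i ≤ E) :
    1 - ∏ i ∈ Finset.Icc 1 Δ, (1 + ε i / (C - i)) ≥
      1 - (1 + 100 / C) * Real.exp (E * Real.log (C / (C - Δ))) := by
  have hΔR : (25 : ℝ) ≤ Δ := by exact_mod_cast hΔ
  have hΔC := le_two_mul_sub_of_exp_div_mul_le (by positivity) hC
  have hCpos : 0 < C := by linarith
  have hexp : exp (2 / C) ≤ 1 + 100 / C := by
    have := exp_le_one_add_two_mul (x := 2 / C) (by positivity)
      (by rw [div_le_div_iff₀ hCpos two_pos]; linarith)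
    have : 2 * (2 / C) ≤ 100 / C := by rw [← mul_div_assoc]; gcongr; norm_num
    linarith
  rw [ge_iff_le, sub_le_sub_iff_left]
  calc ∏ i ∈ Icc 1 Δ, (1 + ε i / (C - i))
      ≤ exp (E * ∑ i ∈ Icc 1 Δ, (C - i)⁻¹) := by
        refine prod_one_add_div_le_exp (fun i hi ↦ ?_) (fun i hi ↦ ?_) hhi <;>
        · have : (i : ℝ) ≤ Δ := by exact_mod_cast (mem_Icc.mp hi).2
          linarith [hlo i hi]
    _ ≤ exp (2 / C) * exp (E * log (C / (C - Δ))) := by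
        rw [← exp_add, add_comm]
        exact exp_le_exp.mpr (mul_sum_Icc_inv_sub_le hE0 hE1 (by linarith) hΔC)
    _ ≤ (1 + 100 / C) * exp (E * log (C / (C - Δ))) := by gcongr
end

section
/- Let Δ be a natural number with Δ ≥ 25 and let C be a real number with C ≥ (e/(e-1))·Δ. Let E' be a real number with -2 ≤ E' ≤ 0, and let ε₁, …, ε_Δ be real numbers with ε_i ≥ E' for all i. Then 1 − ∏_{i=1}^{Δ} (1 + ε_i/(C-i)) ≤ 1 − (1 − 100/C)·exp(E'·log(C/(C-Δ))). -/
/-!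
Each factor is at least `1 + E'/(C - i)`, and with `u = C - i ≥ 4` and `t = E' ∈ [-2, 0]`,
`log (1 + t/u) ≥ t · (log (u + 1) - log u) - 10/u²`. Summed over `i`, the main terms telescope to
`E' · log (C/(C - Δ))`, while `C ≥ e/(e-1) · Δ` means `C - Δ ≥ C/e`, so the errors total at most
`10 Δ/(C - Δ)² ≤ 100/C`. Exponentiating and using `exp (-x) ≥ 1 - x` gives the bound.
-/

open Real Finset

lemma neg_sub_two_mul_sq_le_log_one_sub {x : ℝ} (hx : x ≤ 1 / 2) :
    -x - 2 * x ^ 2 ≤ log (1 - x) := by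
  have hpos : 0 < 1 - x := by linarith
  have hinv : (1 - x)⁻¹ ≤ 1 + x + 2 * x ^ 2 := by
    rw [inv_le_iff_one_le_mul₀ hpos]
    nlinarith
  linarith [one_sub_inv_le_log_of_pos hpos]

lemma inv_sub_inv_sq_le_log_add_one_sub_log {u : ℝ} (hu : 0 < u) :
    1 / u - 1 / u ^ 2 ≤ log (u + 1) - log u := by
  have hlog : log u - log (u + 1) ≤ u / (u + 1) - 1 := by
    rw [← log_div hu.ne' (by linarith)]
    exact log_le_sub_one_of_pos (by positivity)
  have hinv : 1 / u - 1 / u ^ 2 ≤ 1 - u / (u + 1) := by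
    rw [div_sub_div _ _ hu.ne' (by positivity), one_sub_div (by linarith),
      div_le_div_iff₀ (by positivity) (by linarith)]
    nlinarith
  linarith

lemma mul_log_add_one_sub_log_sub_le_log_one_add_div {u t : ℝ} (hu : 4 ≤ u) (ht₀ : -2 ≤ t)
    (ht : t ≤ 0) : t * (log (u + 1) - log u) - 10 / u ^ 2 ≤ log (1 + t / u) := by
  have hu₀ : 0 < u := by linarith
  have hquad : -(-t / u) - 2 * (-t / u) ^ 2 ≤ log (1 + t / u) := by
    convert neg_sub_two_mul_sq_le_log_one_sub (x := -t / u)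
      (by rw [div_le_iff₀ hu₀]; linarith) using 2
    ring
  have hmain : t * (log (u + 1) - log u) ≤ t * (1 / u - 1 / u ^ 2) :=
    mul_le_mul_of_nonpos_left (inv_sub_inv_sq_le_log_add_one_sub_log hu₀) ht
  have herr : t * (1 / u - 1 / u ^ 2) - 10 / u ^ 2 ≤ -(-t / u) - 2 * (-t / u) ^ 2 := by
    rw [← sub_nonneg]
    have hrw : -(-t / u) - 2 * (-t / u) ^ 2 - (t * (1 / u - 1 / u ^ 2) - 10 / u ^ 2)
        = (10 + t - 2 * t ^ 2) / u ^ 2 := by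
      field_simp
      ring
    rw [hrw]
    exact div_nonneg (by nlinarith) (by positivity)
  linarith

lemma sum_Icc_log_sub_log (C : ℝ) (n : ℕ) :
    ∑ i ∈ Icc 1 n, (log (C - i + 1) - log (C - i)) = log C - log (C - n) := by
  induction n with
  | zero => simp
  | succ n ih =>
    rw [sum_Icc_succ_top (by omega), ih]
    push_cast
    rw [show C - (n + 1) + 1 = C - n by ring]
    ring

lemma le_exp_one_mul_sub_of_le {C x : ℝ} (h : exp 1 / (exp 1 - 1) * x ≤ C) :
    C ≤ exp 1 * (C - x) := by
  have he : 0 < exp 1 - 1 := by linarith [exp_one_gt_two]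
  rw [div_mul_eq_mul_div, div_le_iff₀ he] at h
  linarith

lemma le_sub_natCast_of_mem_Icc {a C : ℝ} {i n : ℕ} (h : a ≤ C - n) (hi : i ∈ Icc 1 n) :
    a ≤ C - i := by
  have : (i : ℝ) ≤ n := by exact_mod_cast (mem_Icc.mp hi).2
  linarith

lemma sum_Icc_ten_div_sq_le {C : ℝ} {n : ℕ} (hpos : 0 < C - n) (hC : C ≤ exp 1 * (C - n)) :
    ∑ i ∈ Icc 1 n, 10 / (C - i) ^ 2 ≤ 100 / C := by
  have hC₀ : 0 < C := by linarith [(Nat.cast_nonneg n : (0 : ℝ) ≤ n)]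
  have hterm : ∀ i ∈ Icc 1 n, 10 / (C - i) ^ 2 ≤ 10 / (C - n) ^ 2 := fun i hi => by
    gcongr
    exact (mem_Icc.mp hi).2
  -- With `d = C - n`: `n C = (C - d) C ≤ (e d - d) e d` since `d ≤ C ≤ e d`.
  have hkey : n * C ≤ 10 * (C - n) ^ 2 := by
    have he := exp_one_lt_three
    have he₁ := exp_one_gt_two
    have hquad : C * (C - (C - n)) ≤ exp 1 * (exp 1 - 1) * (C - n) ^ 2 := by
      nlinarith [mul_nonneg (sub_nonneg.mpr hC)
        (by nlinarith : (0 : ℝ) ≤ C + exp 1 * (C - n) - (C - n))]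
    have hcoef : exp 1 * (exp 1 - 1) ≤ 10 := by nlinarith
    nlinarith [mul_le_mul_of_nonneg_right hcoef (sq_nonneg (C - n))]
  calc ∑ i ∈ Icc 1 n, 10 / (C - i) ^ 2 ≤ n * (10 / (C - n) ^ 2) := by
        simpa using sum_le_sum hterm
    _ ≤ 100 / C := by
        rw [← mul_div_assoc, div_le_div_iff₀ (by positivity) hC₀]
        nlinarith

lemma half_le_sub_of_le_exp_one_mul_sub {C x : ℝ} (hx : 0 ≤ x) (hC : C ≤ exp 1 * (C - x)) :
    x / 2 ≤ C - x := by
  have he := exp_one_lt_three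
  have he₁ := exp_one_gt_two
  have hd : 0 ≤ C - x := by nlinarith
  nlinarith

lemma one_add_div_pos {t u : ℝ} (hu : 0 < u) (ht : -u < t) : 0 < 1 + t / u := by
  rw [one_add_div hu.ne']
  exact div_pos (by linarith) hu

section

variable {C t : ℝ} {n : ℕ}

lemma mul_log_div_sub_le_sum_log_one_add_div (hgap : 4 ≤ C - n) (hC : C ≤ exp 1 * (C - n))
    (ht₀ : -2 ≤ t) (ht : t ≤ 0) :
    t * log (C / (C - n)) - 100 / C ≤ ∑ i ∈ Icc 1 n, log (1 + t / (C - i)) :=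
  calc t * log (C / (C - n)) - 100 / C
      ≤ ∑ i ∈ Icc 1 n, (t * (log (C - i + 1) - log (C - i)) - 10 / (C - i) ^ 2) := by
        have hC₀ : 0 < C := by linarith [(Nat.cast_nonneg n : (0 : ℝ) ≤ n)]
        rw [sum_sub_distrib, ← mul_sum, sum_Icc_log_sub_log, log_div hC₀.ne' (by linarith)]
        linarith [sum_Icc_ten_div_sq_le (by linarith) hC]
    _ ≤ ∑ i ∈ Icc 1 n, log (1 + t / (C - i)) := sum_le_sum fun i hi => by
        simpa only [sub_add_cancel] using mul_log_add_one_sub_log_sub_le_log_one_add_div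
          (le_sub_natCast_of_mem_Icc hgap hi) ht₀ ht

lemma one_sub_mul_exp_mul_log_le_prod_one_add_div (hgap : 4 ≤ C - n)
    (hC : C ≤ exp 1 * (C - n)) (ht₀ : -2 ≤ t) (ht : t ≤ 0) :
    (1 - 100 / C) * exp (t * log (C / (C - n))) ≤ ∏ i ∈ Icc 1 n, (1 + t / (C - i)) :=
  calc (1 - 100 / C) * exp (t * log (C / (C - n)))
      ≤ exp (-(100 / C)) * exp (t * log (C / (C - n))) := by
        gcongr
        linarith [add_one_le_exp (-(100 / C))]
    _ ≤ exp (∑ i ∈ Icc 1 n, log (1 + t / (C - i))) := by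
        rw [← exp_add, exp_le_exp]
        linarith [mul_log_div_sub_le_sum_log_one_add_div hgap hC ht₀ ht]
    _ = ∏ i ∈ Icc 1 n, (1 + t / (C - i)) := by
        rw [exp_sum]
        refine prod_congr rfl fun i hi => exp_log (one_add_div_pos ?_ ?_) <;>
          linarith [le_sub_natCast_of_mem_Icc hgap hi]

end

/-- Single-level error bound, upper-bound half: with `Δ ≥ 25`, `C ≥ (e/(e-1))·Δ`,
`-2 ≤ E' ≤ 0` and `ε_i ≥ E'` for `i = 1, …, Δ`, we have
`1 − ∏_{i=1}^{Δ} (1 + ε_i/(C-i)) ≤ 1 − (1 − 100/C)·exp(E'·log(C/(C-Δ)))`. -/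
theorem stmt_8 (Δ : ℕ) (hΔ : 25 ≤ Δ) (C : ℝ)
    (hC : Real.exp 1 / (Real.exp 1 - 1) * Δ ≤ C)
    (E' : ℝ) (hE'lo : -2 ≤ E') (hE'hi : E' ≤ 0) (ε : ℕ → ℝ)
    (hlo : ∀ i ∈ Finset.Icc 1 Δ, E' ≤ ε i) :
    1 - ∏ i ∈ Finset.Icc 1 Δ, (1 + ε i / (C - i)) ≤
      1 - (1 - 100 / C) * Real.exp (E' * Real.log (C / (C - Δ))) := by
  have hCe : C ≤ exp 1 * (C - Δ) := le_exp_one_mul_sub_of_le hC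
  have hgap : 4 ≤ C - Δ := by
    have hΔ' : (25 : ℝ) ≤ Δ := by exact_mod_cast hΔ
    linarith [half_le_sub_of_le_exp_one_mul_sub (by linarith) hCe]
  have hmono : ∏ i ∈ Icc 1 Δ, (1 + E' / (C - i)) ≤ ∏ i ∈ Icc 1 Δ, (1 + ε i / (C - i)) := by
    refine prod_le_prod (fun i hi => ?_) fun i hi => ?_ <;>
      have hu := le_sub_natCast_of_mem_Icc hgap hi
    · exact (one_add_div_pos (by linarith) (by linarith)).le
    · gcongr
      exact hlo i hi
  linarith [one_sub_mul_exp_mul_log_le_prod_one_add_div hgap hCe hE'lo hE'hi]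
end

section
/- Define f_δ(x) := 1 − exp((1-δ)·x) for real δ and x. For every δ with 0 ≤ δ < 1/2 and every real ε ≥ 0, one has f_δ(f_δ(ε)) ≤ (1-δ)·ε. -/
/-- `f_δ(x) = 1 − exp((1-δ)·x)`. -/
noncomputable def fdelta (δ x : ℝ) : ℝ := 1 - Real.exp ((1 - δ) * x)

lemma aux_contract (t : ℝ) (ht : 0 ≤ t) : 1 - t ≤ Real.exp (1 - Real.exp t) := by
  set g : ℝ → ℝ := fun t => Real.exp (1 - Real.exp t) + t with hg
  have hmono : MonotoneOn g (Set.Ici (0:ℝ)) := by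
    apply monotoneOn_of_deriv_nonneg (convex_Ici 0)
    · fun_prop
    · intro x hx
      exact ((((Real.hasDerivAt_exp x).const_sub 1).exp.add (hasDerivAt_id x))).differentiableAt.differentiableWithinAt
    · intro x hx
      have hd : HasDerivAt g (Real.exp (1 - Real.exp x) * -Real.exp x + 1) x :=
        (((Real.hasDerivAt_exp x).const_sub 1).exp).add (hasDerivAt_id x)
      rw [hd.deriv]
      have h1 : Real.exp (1 - Real.exp x) * Real.exp x ≤ 1 := by
        rw [← Real.exp_add]
        have := Real.add_one_le_exp x
        calc Real.exp (1 - Real.exp x + x) ≤ Real.exp 0 :=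
          Real.exp_le_exp.2 (by linarith)
        _ = 1 := Real.exp_zero
      nlinarith
  have h0 : g 0 = 1 := by simp [hg]
  have := hmono (Set.self_mem_Ici) (Set.mem_Ici.2 ht) ht
  rw [h0] at this
  simp only [hg] at this
  linarith

/-- Contraction lemma: for `0 ≤ δ < 1/2` and `ε ≥ 0`, `f_δ(f_δ(ε)) ≤ (1-δ)·ε`. -/
theorem stmt_9 (δ : ℝ) (hδ0 : 0 ≤ δ) (hδ1 : δ < 1 / 2) (ε : ℝ) (hε : 0 ≤ ε) :
    fdelta δ (fdelta δ ε) ≤ (1 - δ) * ε := by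
  set c : ℝ := 1 - δ with hc
  set t : ℝ := c * ε with htdef
  have ht : 0 ≤ t := mul_nonneg (by linarith) hε
  have h1 : Real.exp t ≥ 1 := by
    rw [← Real.exp_zero]; exact Real.exp_le_exp.2 ht
  have hkey : 1 - t ≤ Real.exp (c * (1 - Real.exp t)) := by
    refine le_trans (aux_contract t ht) (Real.exp_le_exp.2 ?_)
    nlinarith
  simp only [fdelta]
  linarith
end

section
/- Let a be a real number with a ≥ 1 and let g be a natural number with g ≥ 10·a. Then ∑_{ℓ=g}^{∞} (e·a/ℓ)^{ℓ} ≤ 2·(2·e·a/g)^{g}, where the sum is over integers ℓ ≥ g (in particular, the series converges). -/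
/-- Tail-sum estimate: for real `a ≥ 1` and natural `g ≥ 10·a`, the series
`∑_{ℓ=g}^{∞} (e·a/ℓ)^ℓ` converges and is at most `2·(2·e·a/g)^g`. -/
theorem stmt_17 (a : ℝ) (ha : 1 ≤ a) (g : ℕ) (hg : 10 * a ≤ (g : ℝ)) :
    Summable (fun k : ℕ => (Real.exp 1 * a / ((k + g : ℕ) : ℝ)) ^ (k + g)) ∧
      ∑' k : ℕ, (Real.exp 1 * a / ((k + g : ℕ) : ℝ)) ^ (k + g) ≤
        2 * (2 * Real.exp 1 * a / (g : ℝ)) ^ g := by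
  have he : (0:ℝ) < Real.exp 1 := Real.exp_pos 1
  have he3 : Real.exp 1 < 3 := by
    have := Real.exp_one_lt_d9; linarith
  have hg0 : (0:ℝ) < g := by linarith
  set q : ℝ := Real.exp 1 * a / g with hqdef
  have hq0 : 0 ≤ q := by positivity
  have hq3 : q ≤ 3/10 := by
    rw [hqdef, div_le_iff₀ hg0]
    nlinarith
  have hq1 : q < 1 := by linarith
  have hterm : ∀ k : ℕ, (Real.exp 1 * a / ((k + g : ℕ) : ℝ)) ^ (k + g) ≤ q ^ g * q ^ k := by
    intro k
    have hk : (g:ℝ) ≤ ((k+g:ℕ):ℝ) := by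
      push_cast
      have : (0:ℝ) ≤ (k:ℝ) := Nat.cast_nonneg k
      linarith
    have hbase : Real.exp 1 * a / ((k+g:ℕ):ℝ) ≤ q := by
      rw [hqdef]
      apply div_le_div_of_nonneg_left (by positivity) hg0 hk
    have hbase0 : 0 ≤ Real.exp 1 * a / ((k+g:ℕ):ℝ) := by positivity
    calc (Real.exp 1 * a / ((k+g:ℕ):ℝ)) ^ (k+g) ≤ q ^ (k+g) :=
          pow_le_pow_left₀ hbase0 hbase _
      _ = q ^ g * q ^ k := by rw [pow_add, mul_comm]
  have hgeo : Summable (fun k : ℕ => q ^ k) := summable_geometric_of_lt_one hq0 hq1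
  have hsumgeo : Summable (fun k : ℕ => q ^ g * q ^ k) := hgeo.mul_left _
  have hnn : ∀ k : ℕ, 0 ≤ (Real.exp 1 * a / ((k + g : ℕ) : ℝ)) ^ (k + g) := by
    intro k; positivity
  have hsum : Summable (fun k : ℕ => (Real.exp 1 * a / ((k + g : ℕ) : ℝ)) ^ (k + g)) :=
    hsumgeo.of_nonneg_of_le hnn hterm
  refine ⟨hsum, ?_⟩
  have h1 : ∑' k : ℕ, (Real.exp 1 * a / ((k + g : ℕ) : ℝ)) ^ (k + g) ≤
      ∑' k : ℕ, q ^ g * q ^ k := Summable.tsum_le_tsum hterm hsum hsumgeo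
  have h2 : ∑' k : ℕ, q ^ g * q ^ k = q ^ g * (1 - q)⁻¹ := by
    rw [tsum_mul_left, tsum_geometric_of_lt_one hq0 hq1]
  have h3 : q ^ g * (1 - q)⁻¹ ≤ 2 * (2 * Real.exp 1 * a / (g : ℝ)) ^ g := by
    have hrhs : 2 * Real.exp 1 * a / (g : ℝ) = 2 * q := by
      rw [hqdef]; ring
    rw [hrhs, mul_pow]
    have hinv : (1 - q)⁻¹ ≤ 2 := by
      rw [inv_le_comm₀ (by linarith) (by norm_num)]
      linarith
    have h2g : (1:ℝ) ≤ 2 ^ g := one_le_pow₀ (by norm_num)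
    have hqg : (0:ℝ) ≤ q ^ g := pow_nonneg hq0 g
    calc q ^ g * (1 - q)⁻¹ ≤ q ^ g * 2 := by nlinarith
      _ ≤ 2 * (2 ^ g * q ^ g) := by nlinarith
  linarith [h1, h2 ▸ h1]
end
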